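/- Adding one agent to a clustered equilibrium does not perturb the original agents: if x ∈ ℝ^n is clustered for parameter k (every opinion value shared by at least k agents) and x' = [x; α] ∈ ℝ^{n+1} for any α ∈ ℝ, then for every original agent i ∈ {1,…,n}, the update f(x', i) in the (n+1)-agent dynamics leaves all coordinates of x' unchanged except possibly none, i.e., f(x', i) = x' for all i ≤ n. -/

import Mathlib

open scoped Classical
open Finset

noncomputable def nearList {n : ℕ} (x : Fin n → ℝ) (i : Fin n) : List (Fin n) :=
  @List.insertionSort (Fin n)
    (fun j j' => |x j - x i| < |x j' - x i| ∨ (|x j - x i| = |x j' - x i| ∧ j ≤ j'))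
    (Classical.decRel _) (List.finRange n)

/-- The set of the `k` agents nearest to `i` in opinion distance (ties broken by lower index). -/
noncomputable def nbr {n : ℕ} (k : ℕ) (x : Fin n → ℝ) (i : Fin n) : Finset (Fin n) :=
  ((nearList x i).take k).toFinset

/-- The asynchronous update `f(x,i)`. -/
noncomputable def upd {n : ℕ} (k : ℕ) (x : Fin n → ℝ) (i : Fin n) : Fin n → ℝ :=
  Function.update x i ((∑ j ∈ nbr k x i, x j) / k)

/-- A configuration is clustered if all neighbors of every agent share its opinion. -/
def Clustered {n : ℕ} (k : ℕ) (x : Fin n → ℝ) : Prop :=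
  ∀ i : Fin n, ∀ j ∈ nbr k x i, x j = x i

/-- `μ(x)`: lowest index attaining the minimum. -/
noncomputable def argminIdx {n : ℕ} [NeZero n] (x : Fin n → ℝ) : Fin n :=
  (Finset.univ.filter fun i => ∀ j, x i ≤ x j).min' (by
    obtain ⟨i, -, hi⟩ := Finset.exists_min_image Finset.univ x Finset.univ_nonempty
    exact ⟨i, Finset.mem_filter.mpr ⟨Finset.mem_univ _, fun j => hi j (Finset.mem_univ j)⟩⟩)

/-- `M(x)`: lowest index attaining the maximum. -/
noncomputable def argmaxIdx {n : ℕ} [NeZero n] (x : Fin n → ℝ) : Fin n :=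
  argminIdx (fun i => -x i)

/-- Trajectory of the dynamics with (possibly state-dependent) update selector `σ`. -/
noncomputable def traj {n : ℕ} (k : ℕ) (σ : ℕ → (Fin n → ℝ) → Fin n) (x0 : Fin n → ℝ) :
    ℕ → Fin n → ℝ
  | 0 => x0
  | t + 1 => upd k (traj k σ x0 t) (σ t (traj k σ x0 t))

/-!
In `Fin.snoc x α` every original agent `i` still has at least `k` agents at opinion distance
zero. These come first in `nearList`, which is sorted by distance to `x i`, so the `k` nearest
neighbours of `i` all share its opinion and their average is `x i` again.
-/

theorem List.forall_mem_take_of_le_card_filter {α : Type*} [DecidableEq α] {P : α → Prop}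
    [DecidablePred P] {l : List α} (hl : l.Pairwise fun a b => P b → P a) {k : ℕ}
    (hk : k ≤ #(l.toFinset.filter P)) : ∀ a ∈ l.take k, P a := by
  intro a ha
  obtain ⟨p, hp, rfl⟩ := List.mem_take_iff_getElem.mp ha
  by_contra hPa
  have hdrop : l.drop p = l[p] :: l.drop (p + 1) := List.drop_eq_getElem_cons _
  have hrest : ∀ b ∈ l.drop (p + 1), ¬P b := by
    have := List.take_append_drop p l ▸ hl
    rw [hdrop, List.pairwise_append, List.pairwise_cons] at this
    exact fun b hb hPb => hPa (this.2.1.1 b hb hPb)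
  have hsub : l.toFinset.filter P ⊆ (l.take p).toFinset := by
    intro b hb
    obtain ⟨hbl, hPb⟩ := Finset.mem_filter.mp hb
    rw [List.mem_toFinset, ← List.take_append_drop p l, hdrop] at hbl
    rw [List.mem_toFinset]
    rcases List.mem_append.mp hbl with hb | hb
    · exact hb
    · rcases List.mem_cons.mp hb with rfl | hb
      · exact absurd hPb hPa
      · exact absurd hPb (hrest b hb)
  have := (Finset.card_le_card hsub).trans (List.toFinset_card_le _)
  rw [List.length_take] at this
  omega

section Neighbors

variable {n : ℕ} (x : Fin n → ℝ) (i : Fin n)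

theorem nearList_perm : (nearList x i).Perm (List.finRange n) :=
  @List.perm_insertionSort _ _ (Classical.decRel _) _

theorem nearList_pairwise :
    (nearList x i).Pairwise fun j j' => |x j - x i| ≤ |x j' - x i| := by
  let r : Fin n → Fin n → Prop := fun j j' =>
    |x j - x i| < |x j' - x i| ∨ (|x j - x i| = |x j' - x i| ∧ j ≤ j')
  have hr : ∀ j j', r j j' ↔ toLex (|x j - x i|, j) ≤ toLex (|x j' - x i|, j') := fun _ _ => by
    rw [Prod.Lex.toLex_le_toLex]
  have : Std.Total r := ⟨fun j j' => by simp only [hr]; exact le_total _ _⟩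
  have : IsTrans (Fin n) r := ⟨fun a b c => by simp only [hr]; exact le_trans⟩
  refine (@List.pairwise_insertionSort _ r (Classical.decRel _) _ _ _).imp ?_
  rintro j j' (h | ⟨h, -⟩)
  exacts [h.le, h.le]

theorem card_nbr (k : ℕ) (hkn : k ≤ n) : #(nbr k x i) = k := by
  have hnd := (nearList_perm x i).nodup_iff.mpr (List.nodup_finRange n)
  rw [nbr, List.toFinset_card_of_nodup (hnd.sublist (List.take_sublist _ _)), List.length_take,
    (nearList_perm x i).length_eq, List.length_finRange]
  exact min_eq_left hkn

theorem eq_of_mem_nbr_of_le_card {k : ℕ} (hk : k ≤ #{j | x j = x i}) :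
    ∀ j ∈ nbr k x i, x j = x i := by
  have hfin : (nearList x i).toFinset = univ := by
    rw [List.toFinset_eq_of_perm _ _ (nearList_perm x i), List.toFinset_finRange]
  have hsorted : (nearList x i).Pairwise fun j j' => x j' = x i → x j = x i := by
    refine (nearList_pairwise x i).imp fun {j j'} h hj' => ?_
    rw [hj', sub_self, abs_zero] at h
    exact sub_eq_zero.mp (abs_nonpos_iff.mp h)
  intro j hj
  exact List.forall_mem_take_of_le_card_filter hsorted (hfin ▸ hk) j (List.mem_toFinset.mp hj)

theorem upd_eq_self_of_le_card {k : ℕ} (hk : k ≠ 0) (hcl : k ≤ #{j | x j = x i}) :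
    upd k x i = x := by
  have hkn : k ≤ n := hcl.trans (card_le_univ _ |>.trans_eq (Fintype.card_fin n))
  have hsum : ∑ j ∈ nbr k x i, x j = k * x i := by
    rw [sum_congr rfl (eq_of_mem_nbr_of_le_card x i hcl), sum_const, card_nbr x i k hkn,
      nsmul_eq_mul]
  rw [upd, hsum, mul_div_cancel_left₀ _ (Nat.cast_ne_zero.mpr hk), Function.update_eq_self]

end Neighbors

theorem card_filter_eq_le_card_filter_snoc {n : ℕ} (x : Fin n → ℝ) (α : ℝ) (i : Fin n) :
    #{j | x j = x i} ≤
      #{j | Fin.snoc (α := fun _ => ℝ) x α j = Fin.snoc (α := fun _ => ℝ) x α i.castSucc} :=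
  card_le_card_of_injOn Fin.castSucc (fun j hj => by simpa using hj)
    (Fin.castSucc_injective n).injOn

theorem add_agent_robust_general {n k : ℕ} (hk : 1 ≤ k) (x : Fin n → ℝ)
    (hx : ∀ i : Fin n, k ≤ (Finset.univ.filter fun j => x j = x i).card) (α : ℝ) :
    ∀ i : Fin n, upd k (Fin.snoc x α) (Fin.castSucc i) = Fin.snoc x α := fun i =>
  upd_eq_self_of_le_card _ _ (Nat.one_le_iff_ne_zero.mp hk)
    ((hx i).trans (card_filter_eq_le_card_filter_snoc x α i))

/-- appending one agent to a clustered equilibrium (every opinion value shared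
by at least `k` agents) does not perturb the original agents. -/
theorem add_agent_robust {n k : ℕ} (hk : 1 ≤ k) (hkn : k ≤ n) (x : Fin n → ℝ)
    (hx : ∀ i : Fin n, k ≤ (Finset.univ.filter fun j => x j = x i).card) (α : ℝ) :
    ∀ i : Fin n, upd k (Fin.snoc x α) (Fin.castSucc i) = Fin.snoc x α :=
  add_agent_robust_general hk x hx α
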